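/- arXiv:2602.14171 — 3 statements merged into one kernel-verified Lean document; each statement's English description precedes it below -/
import Mathlib

section
/- Let k be a field and f(t) ≠ t an irreducible polynomial over k of degree d, and let φ be a d×d matrix over k with characteristic polynomial f(t). Then the representation V of the quiver 1 ⇄ 2 with V_1 = V_2 = k^d, φ_{12} = Id, and φ_{21} = φ is a simple representation. -/
open Polynomial


/-- A representation of the quiver `1 ⇄ 2` over a field `k` is given by vector spaces
`V1, V2` and linear maps `f12 : V2 → V1`, `f21 : V1 → V2`.  It is simple if it is nonzero
and has no proper nonzero subrepresentation, where a subrepresentation is a pair of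
subspaces preserved by the two maps. -/
def IsSimpleKroneckerPair (k V1 V2 : Type*) [Field k] [AddCommGroup V1] [AddCommGroup V2]
    [Module k V1] [Module k V2] (f12 : V2 →ₗ[k] V1) (f21 : V1 →ₗ[k] V2) : Prop :=
  (Nontrivial V1 ∨ Nontrivial V2) ∧
    ∀ (W1 : Submodule k V1) (W2 : Submodule k V2),
      (∀ v ∈ W2, f12 v ∈ W1) → (∀ v ∈ W1, f21 v ∈ W2) →
      (W1 = ⊥ ∧ W2 = ⊥) ∨ (W1 = ⊤ ∧ W2 = ⊤)

/-- Let `f(t) ≠ t` be an irreducible polynomial over a field `k` of degree `d`, and `φ`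
a `d × d` matrix with characteristic polynomial `f`.  Then the representation of the
quiver `1 ⇄ 2` with `V₁ = V₂ = k^d`, `φ₁₂ = Id` and `φ₂₁ = φ` is simple. -/
theorem stmt3 (k : Type*) [Field k] (f : Polynomial k) (hf : Irreducible f)
    (hfX : f ≠ Polynomial.X)
    (φ : Matrix (Fin f.natDegree) (Fin f.natDegree) k) (hchar : φ.charpoly = f) :
    IsSimpleKroneckerPair k (Fin f.natDegree → k) (Fin f.natDegree → k)
      LinearMap.id φ.mulVecLin := by
  have hdpos : 0 < f.natDegree := hf.natDegree_pos
  have hmonic : f.Monic := hchar ▸ φ.charpoly_monic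
  -- constant coefficient nonzero
  have hc0 : f.coeff 0 ≠ 0 := by
    intro h0
    have hXdvd : X ∣ f := X_dvd_iff.mpr h0
    have hassoc : Associated (X : k[X]) f :=
      (Polynomial.irreducible_X).associated_of_dvd hf hXdvd
    exact hfX (Polynomial.eq_of_monic_of_associated hmonic Polynomial.monic_X hassoc.symm)
  have hdet : IsUnit φ.det := by
    rw [Matrix.det_eq_sign_charpoly_coeff, hchar]
    exact (IsUnit.mul (isUnit_one.neg.pow _) hc0.isUnit)
  -- Cayley-Hamilton for mulVecLin
  have hch0 : aeval φ f = 0 := by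
    have := Matrix.aeval_self_charpoly φ; rwa [hchar] at this
  have heq : φ.mulVecLin = Matrix.toLinAlgEquiv'.toAlgHom φ :=
    LinearMap.ext fun v => by
      simp [Matrix.mulVecLin_apply, Matrix.toLinAlgEquiv'_apply]
  have hCH : aeval φ.mulVecLin f = 0 := by
    rw [heq, Polynomial.aeval_algHom_apply, hch0, map_zero]
  constructor
  · left
    have : Nonempty (Fin f.natDegree) := ⟨⟨0, hdpos⟩⟩
    infer_instance
  intro W1 W2 h12 h21
  have hW21 : W2 ≤ W1 := fun v hv => h12 v hv
  by_cases hbot : W1 = ⊥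
  · exact Or.inl ⟨hbot, le_bot_iff.mp (hbot ▸ hW21)⟩
  right
  have hinv : ∀ w ∈ W1, φ.mulVecLin w ∈ W1 := fun w hw => hW21 (h21 w hw)
  obtain ⟨v, hvW, hv0⟩ := Submodule.exists_mem_ne_zero_of_ne_bot hbot
  have hpow : ∀ n : ℕ, (φ.mulVecLin ^ n) v ∈ W1 := by
    intro n
    induction n with
    | zero => simpa using hvW
    | succ n ih => rw [pow_succ', Module.End.mul_apply]; exact hinv _ ih
  have hli : LinearIndependent k (fun i : Fin f.natDegree => (φ.mulVecLin ^ (i : ℕ)) v) := by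
    rw [linearIndependent_iff']
    intro s c hs i hi
    by_contra hci
    set g : Polynomial k := ∑ j ∈ s, C (c j) * X ^ (j : ℕ) with hg
    have hgv : aeval φ.mulVecLin g v = 0 := by
      rw [hg, map_sum]
      simpa [LinearMap.sum_apply, mul_smul, Polynomial.aeval_mul] using hs
    have hgne : g ≠ 0 := by
      intro h0
      apply hci
      have := congrArg (fun p => Polynomial.coeff p (i : ℕ)) h0
      simpa [hg, Polynomial.finset_sum_coeff, Polynomial.coeff_C_mul,
        Polynomial.coeff_X_pow, Fin.val_eq_val, Finset.sum_ite_eq', hi] using this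
    have hdeg : g.natDegree < f.natDegree := by
      have hle : g.natDegree ≤ f.natDegree - 1 := by
        apply Polynomial.natDegree_sum_le_of_forall_le
        intro j hj
        refine le_trans (Polynomial.natDegree_C_mul_le _ _) ?_
        rw [Polynomial.natDegree_X_pow]
        exact Nat.le_sub_one_of_lt j.isLt
      omega
    have hndvd : ¬ f ∣ g := fun hdvd =>
      absurd (Polynomial.natDegree_le_of_dvd hdvd hgne) (by omega)
    obtain ⟨a, b, hab⟩ := hf.coprime_iff_not_dvd.mpr hndvd
    have hv : v = 0 := by
      have h1 : aeval φ.mulVecLin (a * f + b * g) v = v := by rw [hab]; simp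
      rw [map_add, map_mul, map_mul, hCH, mul_zero, zero_add, Module.End.mul_apply,
        hgv, map_zero] at h1
      exact h1.symm
    exact hv0 hv
  have hspan : Submodule.span k
      (Set.range fun i : Fin f.natDegree => (φ.mulVecLin ^ (i : ℕ)) v) ≤ W1 := by
    rw [Submodule.span_le]
    rintro _ ⟨i, rfl⟩
    exact hpow i
  have htop : W1 = ⊤ := by
    apply Submodule.eq_top_of_finrank_eq
    have h1 : f.natDegree ≤ Module.finrank k W1 := by
      have := Submodule.finrank_mono hspan
      rwa [finrank_span_eq_card hli, Fintype.card_fin] at this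
    have h2 : Module.finrank k W1 ≤ f.natDegree := by
      have := Submodule.finrank_le W1
      simpa [Module.finrank_pi] using this
    have h3 : Module.finrank k (Fin f.natDegree → k) = f.natDegree := by
      simp [Module.finrank_pi]
    omega
  refine ⟨htop, ?_⟩
  rw [eq_top_iff]
  intro w _
  have hmem : φ⁻¹.mulVec w ∈ W1 := htop ▸ Submodule.mem_top
  have hw : φ.mulVecLin (φ⁻¹.mulVec w) = w := by
    rw [Matrix.mulVecLin_apply, Matrix.mulVec_mulVec, Matrix.mul_nonsing_inv _ hdet,
      Matrix.one_mulVec]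
  exact hw ▸ h21 _ hmem
end

section
/- Let A be a semiprimary ring with rad(A)² = 0 and M an indecomposable non-projective A-module with minimal projective presentation φ: P⁻ → P⁺. Then the socle of P⁺ equals rad(A)·P⁺. -/
/-- The socle of a module: the sum of all its simple submodules. -/
def moduleSocle (A M : Type*) [Ring A] [AddCommGroup M] [Module A M] : Submodule A M :=
  sSup {W : Submodule A M | IsSimpleModule A W}

/-- A module is indecomposable if it is nonzero and its only idempotent endomorphisms are
`0` and the identity. -/
def IsIndecomposableModule (A M : Type*) [Ring A] [AddCommGroup M] [Module A M] : Prop :=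
  Nontrivial M ∧ ∀ f : M →ₗ[A] M, f ∘ₗ f = f → f = 0 ∨ f = LinearMap.id

/-- A module annihilated by `J` is semisimple when `A ⧸ J` is a semisimple module. -/
lemma aux_semisimple_of_ann {A N : Type*} [Ring A] [AddCommGroup N] [Module A N] (J : Ideal A)
    (hsemi : IsSemisimpleModule A (A ⧸ (J : Submodule A A)))
    (hann : ∀ a ∈ J, ∀ x : N, a • x = 0) : IsSemisimpleModule A N := by
  haveI := hsemi
  apply isSemisimpleModule_of_isSemisimpleModule_submodule'
    (p := fun x : N => LinearMap.range (LinearMap.toSpanSingleton A N x))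
  · intro x
    have hle : (J : Submodule A A) ≤ LinearMap.ker (LinearMap.toSpanSingleton A N x) := by
      intro a ha
      simp only [LinearMap.mem_ker, LinearMap.toSpanSingleton_apply]
      exact hann a ha x
    have h2 : LinearMap.range (LinearMap.toSpanSingleton A N x)
        = LinearMap.range (Submodule.liftQ (J : Submodule A A)
            (LinearMap.toSpanSingleton A N x) hle) := (Submodule.range_liftQ _ _ _).symm
    rw [h2]
    exact IsSemisimpleModule.range _
  · rw [eq_top_iff]
    intro x _
    exact Submodule.mem_iSup_of_mem x ⟨1, by simp⟩

/-- A semisimple submodule is contained in the socle. -/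
lemma aux_le_socle {A P : Type*} [Ring A] [AddCommGroup P] [Module A P]
    (N : Submodule A P) (h : IsSemisimpleModule A N) :
    N ≤ sSup {W : Submodule A P | IsSimpleModule A W} := by
  haveI := h
  conv_lhs => rw [← Submodule.range_subtype N, ← Submodule.map_top,
    ← IsSemisimpleModule.sSup_simples_eq_top A N, sSup_eq_iSup', Submodule.map_iSup]
  apply iSup_le
  rintro ⟨W, hW⟩
  apply le_sSup
  haveI : IsSimpleModule A W := hW
  exact IsSimpleModule.congr
    (Submodule.equivMapOfInjective N.subtype N.injective_subtype W).symm

/-- A simple submodule that intersects `V` trivially maps to a simple submodule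
of the quotient-like target of an injective-on-it map. -/
lemma aux_simple_map {A P Q : Type*} [Ring A] [AddCommGroup P] [Module A P]
    [AddCommGroup Q] [Module A Q] (W : Submodule A P) (hW : IsSimpleModule A W)
    (f : P →ₗ[A] Q) (hdisj : W ⊓ LinearMap.ker f = ⊥) :
    IsSimpleModule A (Submodule.map f W) := by
  haveI : IsSimpleModule A W := hW
  have hinj : Function.Injective (f.comp W.subtype) := by
    rw [← LinearMap.ker_eq_bot, LinearMap.ker_comp]
    rw [Submodule.eq_bot_iff]
    rintro ⟨x, hxW⟩ hx
    simp only [Submodule.mem_comap, Submodule.coe_subtype] at hx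
    have : x ∈ W ⊓ LinearMap.ker f := ⟨hxW, hx⟩
    rw [hdisj] at this
    exact Subtype.ext this
  have hrange : LinearMap.range (f.comp W.subtype) = Submodule.map f W := by
    rw [LinearMap.range_comp, Submodule.range_subtype]
  rw [← hrange]
  exact IsSimpleModule.congr (LinearEquiv.ofInjective (f.comp W.subtype) hinj).symm

/-- Let `A` be a semiprimary ring with `rad(A)² = 0` and `M` an indecomposable
non-projective `A`-module with minimal projective presentation `φ : P⁻ → P⁺`.
Then the socle of `P⁺` equals `rad(A)·P⁺`. -/
theorem stmt11 (A : Type*) [Ring A]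
    (J : Ideal A) (hJdef : J = Ideal.jacobson (⊥ : Ideal A)) (hJ2 : J * J = ⊥)
    (hsemiprimary : IsSemisimpleModule A (A ⧸ (J : Submodule A A)))
    (Pm Pp M : Type*) [AddCommGroup Pm] [Module A Pm] [AddCommGroup Pp] [Module A Pp]
    [AddCommGroup M] [Module A M]
    (hPm : Module.Projective A Pm) (hPp : Module.Projective A Pp)
    (φ : Pm →ₗ[A] Pp)
    (hrange : LinearMap.range φ ≤ J • (⊤ : Submodule A Pp))
    (hker : LinearMap.ker φ ≤ J • (⊤ : Submodule A Pm))
    (e : (Pp ⧸ LinearMap.range φ) ≃ₗ[A] M)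
    (hMindec : IsIndecomposableModule A M)
    (hMnotproj : ¬ Module.Projective A M) :
    moduleSocle A Pp = J • (⊤ : Submodule A Pp) := by
  haveI := hPp
  set SJ : Submodule A Pp := J • (⊤ : Submodule A Pp) with hSJ
  have hkill : J • SJ = ⊥ := by
    rw [hSJ, ← Submodule.smul_assoc, Ideal.smul_eq_mul, hJ2, Submodule.bot_smul]
  apply le_antisymm
  · -- socle ≤ J•⊤ : every simple submodule W lies in SJ
    apply sSup_le
    intro W hW
    by_contra hnle
    haveI hWs : IsSimpleModule A W := hW
    have hatom : IsAtom W := isSimpleModule_iff_isAtom.mp hW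
    have hWS : W ⊓ SJ = ⊥ := by
      apply hatom.2
      refine lt_of_le_of_ne inf_le_left fun h => hnle ?_
      rw [← h]; exact inf_le_right
    -- the quotient by SJ is semisimple
    have hannQ : ∀ a ∈ J, ∀ x : Pp ⧸ SJ, a • x = 0 := by
      intro a ha x
      obtain ⟨y, rfl⟩ := Submodule.Quotient.mk_surjective SJ x
      rw [← Submodule.Quotient.mk_smul, Submodule.Quotient.mk_eq_zero]
      exact Submodule.smul_mem_smul ha trivial
    haveI hQss : IsSemisimpleModule A (Pp ⧸ SJ) :=
      aux_semisimple_of_ann J hsemiprimary hannQ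
    set π := SJ.mkQ with hπ
    have hkerπ : LinearMap.ker π = SJ := SJ.ker_mkQ
    set W' := Submodule.map π W with hW'
    -- find a complement of W' in the quotient and pull it back
    obtain ⟨C, hC⟩ := exists_isCompl W'
    set K := Submodule.comap π C with hK
    have hSJK : SJ ≤ K := by
      intro x hx
      simp only [hK, Submodule.mem_comap]
      have : π x = 0 := by rwa [← LinearMap.mem_ker, hkerπ]
      rw [this]; exact C.zero_mem
    have hinfWK : W ⊓ K = ⊥ := by
      rw [Submodule.eq_bot_iff]
      rintro x ⟨hxW, hxK⟩
      have h1 : π x ∈ W' ⊓ C := ⟨Submodule.mem_map_of_mem hxW, hxK⟩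
      rw [hC.inf_eq_bot] at h1
      have h2 : x ∈ SJ := by rwa [← hkerπ, LinearMap.mem_ker]
      have : x ∈ W ⊓ SJ := ⟨hxW, h2⟩
      rwa [hWS] at this
    have hsupWK : W ⊔ K = ⊤ := by
      have hmap : Submodule.map π (W ⊔ K) = ⊤ := by
        rw [Submodule.map_sup, Submodule.map_comap_eq, SJ.range_mkQ, top_inf_eq,
          ← hW', hC.sup_eq_top]
      have := congrArg (Submodule.comap π) hmap
      rw [Submodule.comap_map_eq, Submodule.comap_top, hkerπ] at this
      rw [← this, sup_eq_left.mpr (hSJK.trans le_sup_right)]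
    have hcompl : IsCompl W K := ⟨disjoint_iff.mpr hinfWK, codisjoint_iff.mpr hsupWK⟩
    -- now pass to N = Pp ⧸ range φ
    set q := (LinearMap.range φ).mkQ with hq
    have hkerq : LinearMap.ker q = LinearMap.range φ := (LinearMap.range φ).ker_mkQ
    have hrangeK : LinearMap.range φ ≤ K := le_trans hrange (le_trans (le_of_eq hSJ.symm) hSJK)
    set W₁ := Submodule.map q W with hW₁
    set K₁ := Submodule.map q K with hK₁
    have hinf₁ : W₁ ⊓ K₁ = ⊥ := by
      rw [Submodule.eq_bot_iff]
      rintro x ⟨hxW, hxK⟩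
      obtain ⟨w, hw, rfl⟩ := hxW
      obtain ⟨k, hk, hqk⟩ := hxK
      have hwk : w - k ∈ LinearMap.ker q := by
        rw [LinearMap.mem_ker, map_sub, hqk, sub_self]
      rw [hkerq] at hwk
      have hwK : w ∈ K := by
        have := K.add_mem (hrangeK hwk) hk
        rwa [sub_add_cancel] at this
      have : w ∈ W ⊓ K := ⟨hw, hwK⟩
      rw [hinfWK] at this
      rw [this]; exact map_zero q
    have hsup₁ : W₁ ⊔ K₁ = ⊤ := by
      rw [hW₁, hK₁, ← Submodule.map_sup, hsupWK, Submodule.map_top, Submodule.range_mkQ]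
    have hcompl₁ : IsCompl W₁ K₁ := ⟨disjoint_iff.mpr hinf₁, codisjoint_iff.mpr hsup₁⟩
    -- build the idempotent endomorphism of M
    set pr := W₁.subtype ∘ₗ Submodule.projectionOnto W₁ K₁ hcompl₁ with hpr
    have hpr_left : ∀ w : W₁, pr (w : Pp ⧸ LinearMap.range φ) = w := by
      intro w
      simp [hpr, Submodule.projectionOnto_apply_left hcompl₁ w]
    have hpr_idem : ∀ y, pr (pr y) = pr y := by
      intro y
      exact hpr_left (Submodule.projectionOnto W₁ K₁ hcompl₁ y)
    set g : M →ₗ[A] M := (e.toLinearMap ∘ₗ pr) ∘ₗ e.symm.toLinearMap with hg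
    have hgy : ∀ y, g y = e (pr (e.symm y)) := fun y => rfl
    have hgidem : g ∘ₗ g = g := by
      ext x
      simp only [LinearMap.comp_apply, hgy, LinearEquiv.coe_coe]
      rw [LinearEquiv.symm_apply_apply, hpr_idem]
    rcases hMindec.2 g hgidem with h0 | hid
    · -- projection is zero : W maps to zero in the quotient, so W ≤ range φ ≤ SJ
      have hprz : ∀ y, pr y = 0 := by
        intro y
        have := congrArg (fun f : M →ₗ[A] M => f (e y)) h0
        simp only [hgy, LinearEquiv.symm_apply_apply, LinearMap.zero_apply] at this
        exact e.injective (by rw [this, map_zero])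
      have hW₁bot : W₁ = ⊥ := by
        rw [Submodule.eq_bot_iff]
        intro x hx
        have := hpr_left ⟨x, hx⟩
        rw [hprz] at this
        exact (this.symm : x = 0)
      have hWle : W ≤ SJ := by
        have h1 : W ≤ LinearMap.ker q := by
          rw [← Submodule.comap_bot]
          exact Submodule.map_le_iff_le_comap.mp (le_of_eq hW₁bot)
        rw [hkerq] at h1
        exact h1.trans hrange
      exact hnle hWle
    · -- projection is identity : M ≅ W₁ ≅ W is projective, contradiction
      have hprid : ∀ y, pr y = y := by
        intro y
        have := congrArg (fun f : M →ₗ[A] M => f (e y)) hid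
        simp only [hgy, LinearEquiv.symm_apply_apply, LinearMap.id_apply] at this
        exact e.injective this
      have hK₁bot : K₁ = ⊥ := by
        rw [Submodule.eq_bot_iff]
        intro x hx
        have h1 := hprid x
        have h2 : Submodule.projectionOnto W₁ K₁ hcompl₁ x = 0 :=
          Submodule.projectionOnto_apply_right hcompl₁ ⟨x, hx⟩
        rw [hpr] at h1
        simp only [LinearMap.comp_apply] at h1
        rw [h2] at h1
        simpa using h1.symm
      have hW₁top : W₁ = ⊤ := by
        rw [← hsup₁, hK₁bot, sup_bot_eq]
      -- W is projective as a direct summand of Pp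
      have hWproj : Module.Projective A W := by
        apply Module.Projective.of_split W.subtype (Submodule.projectionOnto W K hcompl)
        ext w
        simp [Submodule.projectionOnto_apply_left hcompl w]
      -- W ≅ W₁ ≅ Pp ⧸ range φ ≅ M
      have hWdisj : W ⊓ LinearMap.ker q = ⊥ := by
        rw [hkerq]
        rw [Submodule.eq_bot_iff]
        rintro x ⟨hxW, hxr⟩
        have : x ∈ W ⊓ SJ := ⟨hxW, hrange hxr⟩
        rwa [hWS] at this
      have hinjq : Function.Injective (q ∘ₗ W.subtype) := by
        rw [← LinearMap.ker_eq_bot, LinearMap.ker_comp]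
        rw [Submodule.eq_bot_iff]
        rintro ⟨x, hxW⟩ hx
        simp only [Submodule.mem_comap, Submodule.coe_subtype] at hx
        have : x ∈ W ⊓ LinearMap.ker q := ⟨hxW, hx⟩
        rw [hWdisj] at this
        exact Subtype.ext this
      have hrangeq : LinearMap.range (q ∘ₗ W.subtype) = W₁ := by
        rw [LinearMap.range_comp, Submodule.range_subtype]
      have eqv : W ≃ₗ[A] M :=
        ((LinearEquiv.ofInjective (q ∘ₗ W.subtype) hinjq).trans
          ((LinearEquiv.ofEq _ _ (hrangeq.trans hW₁top)).trans
            (Submodule.topEquiv))).trans e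
      exact hMnotproj (Module.Projective.of_equiv eqv)
  · -- J•⊤ ≤ socle : J•⊤ is semisimple
    have hann : ∀ a ∈ J, ∀ x : SJ, a • x = 0 := by
      intro a ha x
      apply Subtype.ext
      have h1 : a • (x : Pp) ∈ J • SJ := Submodule.smul_mem_smul ha x.2
      rw [hkill] at h1
      exact h1
    exact aux_le_socle SJ (aux_semisimple_of_ann J hsemiprimary hann)
end

section
/- Let A be a semiprimary ring with rad(A)² = 0, and M, N A-modules without projective direct summands. If f: M → N induces the zero morphism Φ(f) = 0 between the associated modules over the double species, then f factors through a projective module. -/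
universe u

/-- A module has a (nonzero) projective direct summand if it decomposes as `W ⊕ W'`
with `W ≠ 0` projective. -/
def HasProjectiveSummand (A M : Type u) [Ring A] [AddCommGroup M] [Module A M] : Prop :=
  ∃ W W' : Submodule A M, IsCompl W W' ∧ W ≠ ⊥ ∧ Module.Projective A W

/-- Let `A` be a semiprimary ring with `rad(A)² = 0`, and `M`, `N` modules without
projective direct summands, with minimal projective presentations `φ : P⁻ → P⁺` and
`ψ : Q⁻ → Q⁺` and cokernel projections `π_M : P⁺ → M`, `π_N : Q⁺ → N`.  Suppose
`f : M → N` lifts to `(α⁻, α⁺)` on the presentations, and that the induced morphism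
`Φ(f)` of `Γ(A)`-modules is zero, i.e. `α⁺` vanishes on `rad(A)·P⁺` (so the induced map
`rad P⁺ → rad Q⁺` is zero) and `α⁻` has range inside `rad(A)·Q⁻` (so the induced map
`P⁻/rad P⁻ → Q⁻/rad Q⁻` is zero).  Then `f` factors through a projective module
(equivalently, through a free module). -/
theorem stmt12 (A : Type u) [Ring A]
    (J : Ideal A) (hJdef : J = Ideal.jacobson (⊥ : Ideal A)) (hJ2 : J * J = ⊥)
    (hsemiprimary : IsSemisimpleModule A (A ⧸ (J : Submodule A A)))
    (M N Pm Pp Qm Qp : Type u)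
    [AddCommGroup M] [Module A M] [AddCommGroup N] [Module A N]
    [AddCommGroup Pm] [Module A Pm] [AddCommGroup Pp] [Module A Pp]
    [AddCommGroup Qm] [Module A Qm] [AddCommGroup Qp] [Module A Qp]
    (hPm : Module.Projective A Pm) (hPp : Module.Projective A Pp)
    (hQm : Module.Projective A Qm) (hQp : Module.Projective A Qp)
    -- minimal projective presentations of M and N
    (φ : Pm →ₗ[A] Pp) (ψ : Qm →ₗ[A] Qp)
    (hφrange : LinearMap.range φ ≤ J • (⊤ : Submodule A Pp))
    (hφker : LinearMap.ker φ ≤ J • (⊤ : Submodule A Pm))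
    (hψrange : LinearMap.range ψ ≤ J • (⊤ : Submodule A Qp))
    (hψker : LinearMap.ker ψ ≤ J • (⊤ : Submodule A Qm))
    (πM : Pp →ₗ[A] M) (hπM : Function.Surjective πM) (hπMker : LinearMap.ker πM = LinearMap.range φ)
    (πN : Qp →ₗ[A] N) (hπN : Function.Surjective πN) (hπNker : LinearMap.ker πN = LinearMap.range ψ)
    -- M and N have no projective direct summands
    (hM : ¬ HasProjectiveSummand A M) (hN : ¬ HasProjectiveSummand A N)
    -- a morphism f : M → N together with a lift (α⁻, α⁺) to the presentations
    (f : M →ₗ[A] N) (αm : Pm →ₗ[A] Qm) (αp : Pp →ₗ[A] Qp)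
    (hlift : πN ∘ₗ αp = f ∘ₗ πM) (hcomm : ψ ∘ₗ αm = αp ∘ₗ φ)
    -- Φ(f) = 0
    (hplus : ∀ x ∈ J • (⊤ : Submodule A Pp), αp x = 0)
    (hminus : LinearMap.range αm ≤ J • (⊤ : Submodule A Qm)) :
    ∃ (σ : Type u) (g : M →ₗ[A] (σ →₀ A)) (h : (σ →₀ A) →ₗ[A] N), f = h ∘ₗ g := by
  -- αp kills ker πM, so it factors through M
  have hker : LinearMap.ker πM ≤ LinearMap.ker αp := by
    intro x hx
    have : x ∈ J • (⊤ : Submodule A Pp) := hφrange (hπMker ▸ hx)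
    simpa [LinearMap.mem_ker] using hplus x this
  let e : (Pp ⧸ LinearMap.ker πM) ≃ₗ[A] M := πM.quotKerEquivOfSurjective hπM
  let β : M →ₗ[A] Qp := ((LinearMap.ker πM).liftQ αp hker) ∘ₗ (e.symm : M →ₗ[A] _)
  have hβ : ∀ x : Pp, β (πM x) = αp x := by
    intro x
    have he : e.symm (πM x) = Submodule.Quotient.mk x := by
      apply e.injective
      simp [e, LinearMap.quotKerEquivOfSurjective]
    simp [β, he]
  -- f = πN ∘ β
  have hf : ∀ m : M, f m = πN (β m) := by
    intro m
    obtain ⟨x, rfl⟩ := hπM m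
    rw [hβ]
    exact (LinearMap.congr_fun hlift x).symm
  -- Qp is projective, so β factors through a free module
  obtain ⟨s, hs⟩ := hQp.out
  refine ⟨Qp, s ∘ₗ β, πN ∘ₗ Finsupp.linearCombination A (id : Qp → Qp), ?_⟩
  ext m
  simp [hf m, hs (β m)]
end
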